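/- Generalized type I, Blue with no opposing red chips: if the board has no long b-piles (any number ℓ ≥ 0 of long r-piles), Blue is the active player with m_b > 0, and Red holds n_r = 0 red chips, then Blue wins by applying strategy S at every round. -/
import Mathlib


/-!  A model of the two-player, two-color endgame of *So Long Sucker*.

The two remaining players are Blue and Red, identified with their colors.
A pile is a finite sequence of chips (head = top chip).  A game state
records the board, the number of chips of each color held by each player,
and the active player. -/

/-- The two chip colors (also naming the two remaining players). -/
inductive Color : Type
  | b : Color
  | r : Color
deriving DecidableEq, Repr

/-- The opponent's color. -/
def Color.other : Color → Color
  | Color.b => Color.r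
  | Color.r => Color.b

/-- A pile of chips; the head of the list is the top chip. -/
abbrev Pile := List Color

/-- A game state: the board (a list of piles), the chip counts
`chips p c` = number of `c`-colored chips held by player `p`,
and the active player. -/
structure GState where
  board : List Pile
  chips : Color → Color → ℕ
  active : Color

/-- Total number of chips in player `p`'s possession. -/
def totalChips (s : GState) (p : Color) : ℕ :=
  s.chips p Color.b + s.chips p Color.r

/-- The Next Player Rule in the two-player, two-color endgame, as a function
of the pile played on (before the placement) and the color of the placed
chip: if the placement triggers a capture, the capturing player moves next;
otherwise the player of the other color than the placed chip moves next
(this is the unique player allowed by the Next Player Rule). -/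
def nextActive (π : Pile) (c : Color) : Color :=
  if π.head? = some c then c else c.other

/-- Placement of a chip of color `c` on pile number `i` by the active
player, with the Capture Rule and Next Player Rule applied. -/
inductive PlaceOn (i : ℕ) : GState → GState → Prop
  | noCapture (s : GState) (c : Color)
      (hi : i < s.board.length)
      (hc : 0 < s.chips s.active c)
      (hcap : (s.board.getD i []).head? ≠ some c) :
      PlaceOn i s
        { board := s.board.set i (c :: s.board.getD i []),
          chips := fun p x =>
            s.chips p x - (if p = s.active ∧ x = c then 1 else 0),
          active := c.other }
  | capture (s : GState) (c : Color) (d : Color)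
      (hi : i < s.board.length)
      (hc : 0 < s.chips s.active c)
      (hcap : (s.board.getD i []).head? = some c)
      (hd : d ∈ c :: s.board.getD i []) :
      PlaceOn i s
        { board := s.board.set i [],
          chips := fun p x =>
            (s.chips p x - (if p = s.active ∧ x = c then 1 else 0))
              + (if p = c then
                  (c :: s.board.getD i []).count x - (if d = x then 1 else 0)
                 else 0),
          active := c }

/-- One legal move of the active player: placing a chip on some pile
(resolving captures), discarding a prisoner, or donating a prisoner
to the opponent. -/
inductive Step : GState → GState → Prop
  | place (i : ℕ) (s s' : GState) (h : PlaceOn i s s') : Step s s'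
  | discardPrisoner (s : GState)
      (hc : 0 < s.chips s.active s.active.other) :
      Step s
        { board := s.board,
          chips := fun p x =>
            s.chips p x - (if p = s.active ∧ x = s.active.other then 1 else 0),
          active := s.active }
  | donatePrisoner (s : GState)
      (hc : 0 < s.chips s.active s.active.other) :
      Step s
        { board := s.board,
          chips := fun p x =>
            if x = s.active.other then
              (if p = s.active then s.chips p x - 1 else s.chips p x + 1)
            else s.chips p x,
          active := s.active }

/-- Player `p` has a winning strategy from state `s`: either the opponent is
to move with no chips (and `p` refuses to donate), so the opponent is
eliminated and `p` wins; or it is `p`'s turn and some move of `p` leads to a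
winning position; or it is the opponent's turn and every move of the opponent
leads to a position winning for `p`. -/
inductive WinsFor (p : Color) : GState → Prop
  | elim (s : GState) (h : s.active ≠ p) (h0 : totalChips s s.active = 0) :
      WinsFor p s
  | mine (s s' : GState) (h : s.active = p) (hs : Step s s')
      (hw : WinsFor p s') : WinsFor p s
  | theirs (s : GState) (h : s.active ≠ p) (h0 : 0 < totalChips s s.active)
      (hw : ∀ s', Step s s' → WinsFor p s') : WinsFor p s

/-- The index of the pile on which strategy `S` places its guard:
the longest pile whose top chip has the opponent's color `q`,
or an empty pile if there is no `q`-pile. -/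
def targetIdx (q : Color) (l : List Pile) : ℕ :=
  let opp := l.filter (fun π => π.head? == some q)
  if opp.isEmpty then
    l.findIdx (fun π => π.isEmpty)
  else
    l.findIdx (fun π =>
      (π.head? == some q) &&
        (π.length == (opp.map List.length).foldr Nat.max 0))

/-- The state resulting from the active player `p` playing one full round of
strategy `S`: capture every `p`-pile (discarding an opponent chip from a
captured pile when it contains one, and a `p` chip otherwise), discard all
prisoners, and finally place one guard on the longest opponent-colored pile,
or on an empty pile if there is none.  The turn then passes to the
opponent. -/
def SRound (s : GState) : GState :=
  let p := s.active
  let q := p.other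
  let capt := s.board.filter (fun π => π.head? == some p)
  let b1 := s.board.map (fun π => if π.head? == some p then ([] : Pile) else π)
  let g1 := s.chips p p +
      (capt.map (fun π =>
        if π.contains q then π.count p else π.count p - 1)).sum
  let i := targetIdx q b1
  { board := b1.set i (p :: b1.getD i []),
    chips := fun pl x =>
      if pl = p then (if x = p then g1 - 1 else 0) else s.chips pl x,
    active := q }

/-- Player `p` wins by applying strategy `S` at each of `p`'s rounds,
whatever the opponent plays. -/
inductive WinsWithS (p : Color) : GState → Prop
  | elim (s : GState) (h : s.active ≠ p) (h0 : totalChips s s.active = 0) :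
      WinsWithS p s
  | mine (s : GState) (h : s.active = p) (hg : 0 < s.chips p p)
      (hw : WinsWithS p (SRound s)) : WinsWithS p s
  | theirs (s : GState) (h : s.active ≠ p) (h0 : 0 < totalChips s s.active)
      (hw : ∀ s', Step s s' → WinsWithS p s') : WinsWithS p s

/-- Every pile on the board is an alternating sequence of colors. -/
def Alternating (l : List Pile) : Prop := ∀ π ∈ l, π.Chain' (· ≠ ·)

/-- The long piles (length at least 2) whose top chip has color `c`. -/
def longPiles (c : Color) (l : List Pile) : List Pile :=
  l.filter (fun π => decide (2 ≤ π.length) && (π.head? == some c))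

/-- The sum, over all long `c`-piles, of the number of `c` chips they
contain (e.g. `Σᵢ |ρᵢ|_r` for `c = r`). -/
def longSum (c : Color) (l : List Pile) : ℕ :=
  ((longPiles c l).map (fun π => π.count c)).sum

/-- The maximum, over all long `c`-piles, of the number of `c` chips they
contain (`0` if there is no long `c`-pile). -/
def longMax (c : Color) (l : List Pile) : ℕ :=
  ((longPiles c l).map (fun π => π.count c)).foldr Nat.max 0

/-- The total number of chips in the game (in hands and on the board). -/
def chipCount (s : GState) : ℕ :=
  totalChips s Color.b + totalChips s Color.r + (s.board.map List.length).sum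

theorem blue_wins_key : ∀ n : ℕ, ∀ s : GState,
    s.chips Color.r Color.b ≤ n →
    s.chips Color.r Color.r = 0 →
    (s.active = Color.b → 0 < s.chips Color.b Color.b) →
    WinsWithS Color.b s := by
  intro n
  induction n using Nat.strong_induction_on with
  | _ n ih =>
    have hr : ∀ s : GState, s.active = Color.r →
        s.chips Color.r Color.b ≤ n → s.chips Color.r Color.r = 0 →
        WinsWithS Color.b s := by
      intro s ha hle h0
      by_cases hz : s.chips Color.r Color.b = 0
      · exact WinsWithS.elim s (by simp [ha]) (by simp [totalChips, ha, hz, h0])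
      · have hpos : 0 < s.chips Color.r Color.b := Nat.pos_of_ne_zero hz
        have hn : 0 < n := lt_of_lt_of_le hpos hle
        refine WinsWithS.theirs s (by simp [ha]) (by simp [totalChips, ha]; omega) ?_
        intro s' hs
        cases hs with
        | place i _ _ hp =>
          cases hp with
          | noCapture c hi hc hcap =>
            cases c with
            | r => rw [ha, h0] at hc; exact absurd hc (lt_irrefl 0)
            | b =>
              refine ih (n - 1) (by omega) _ ?_ ?_ ?_
              · simp [ha]; omega
              · simp [ha, h0]
              · intro h; simp [Color.other] at h
          | capture c d hi hc hcap hd =>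
            cases c with
            | r => rw [ha, h0] at hc; exact absurd hc (lt_irrefl 0)
            | b =>
              -- the pile is blue-topped, so it contains a blue chip
              obtain ⟨t, ht⟩ : ∃ t, s.board.getD i [] = Color.b :: t := by
                cases hπ : s.board.getD i [] with
                | nil => rw [hπ] at hcap; simp at hcap
                | cons a t =>
                  rw [hπ] at hcap
                  simp at hcap
                  exact ⟨t, by rw [hcap]⟩
              refine ih (n - 1) (by omega) _ ?_ ?_ ?_
              · simp [ha]; omega
              · simp [ha, h0]
              · intro _
                simp [ha]
                right
                rw [← List.getD_eq_getElem?_getD, ht]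
                cases d <;> simp [List.count_cons]
        | discardPrisoner hc =>
          refine ih (n - 1) (by omega) _ ?_ ?_ ?_
          · simp [ha, Color.other]; omega
          · simp [ha, Color.other, h0]
          · intro h; rw [ha] at h; exact absurd h (by simp)
        | donatePrisoner hc =>
          refine ih (n - 1) (by omega) _ ?_ ?_ ?_
          · simp [ha, Color.other]; omega
          · simp [ha, Color.other, h0]
          · intro h; rw [ha] at h; exact absurd h (by simp)
    intro s hle h0 hact
    cases hab : s.active with
    | r => exact hr s hab hle h0
    | b =>
      refine WinsWithS.mine s hab (hact hab) (hr (SRound s) ?_ ?_ ?_)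
      · simp [SRound, hab, Color.other]
      · simpa [SRound, hab, Color.other] using hle
      · simpa [SRound, hab, Color.other] using h0


/-- **Generalized type I, Blue against no red chips.**  Let the board be of
generalized type I (all piles alternating, no long `b`-piles, any number of
long `r`-piles) and let Blue be the active player.  If `m_b > 0` and
`n_r = 0` when Blue's turn starts, then Blue wins by applying strategy `S` at
every round. -/
theorem genTypeI_blue_wins_no_red (s : GState)
    (halt : Alternating s.board)
    (hroom : chipCount s ≤ s.board.length)
    (hactive : s.active = Color.b)
    (hI : longPiles Color.b s.board = [])
    (hmb : 0 < s.chips Color.b Color.b)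
    (hnr : s.chips Color.r Color.r = 0) :
    WinsWithS Color.b s := by
  exact blue_wins_key (s.chips Color.r Color.b) s le_rfl hnr (fun _ => hmb)
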